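/- Let α ≥ 0, γ, λ ∈ ℝ and w, e, e₋, φ' ∈ ℝ^k, with φ = e − γλ e₋ and d = φ − γφ'. If w' ∈ ℝ^k satisfies the zero-reward implicit TD(λ) equation w' = w + α (γ⟨φ', w⟩ + γλ⟨e₋, w⟩ − ⟨e, w'⟩) e, then w' = (I − α Q X) w, where Q = (I + α e eᵀ)⁻¹ and X = e dᵀ. -/

import Mathlib

/-!
Write `M = 1 + α e eᵀ`. Moving the implicit term `-α ⟨e, w'⟩ e` to the left turns the update
into `M w' = w + α (γ ⟨φ', w⟩ + γλ ⟨e₋, w⟩) e`, and expanding `d = e - γλ e₋ - γ φ'` shows that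
the right-hand side is `(M - α e dᵀ) w`. For `α ≥ 0` the matrix determinant lemma gives
`det M = 1 + α ‖e‖² > 0`, so `w' = M⁻¹ (M - α X) w = (1 - α Q X) w`.
-/

open Matrix

namespace Matrix

variable {m R : Type*} [Fintype m] [DecidableEq m]

theorem det_one_add_vecMulVec [CommRing R] (u v : m → R) :
    (1 + vecMulVec u v).det = 1 + v ⬝ᵥ u := by
  rw [vecMulVec_eq Unit, det_one_add_replicateCol_mul_replicateRow]

theorem one_add_smul_vecMulVec_mulVec [CommRing R] (a : R) (u v w : m → R) :
    (1 + a • vecMulVec u v) *ᵥ w = w + (a * (v ⬝ᵥ w)) • u := by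
  rw [add_mulVec, one_mulVec, smul_mulVec, vecMulVec_mulVec, op_smul_eq_smul, smul_smul]

theorem isUnit_det_one_add_smul_vecMulVec_self [Field R] [LinearOrder R] [IsStrictOrderedRing R]
    {a : R} (ha : 0 ≤ a) (u : m → R) : IsUnit (1 + a • vecMulVec u u).det := by
  rw [← smul_vecMulVec, det_one_add_vecMulVec, dotProduct_smul, smul_eq_mul]
  have hu : 0 ≤ u ⬝ᵥ u := Finset.sum_nonneg fun i _ => mul_self_nonneg (u i)
  exact (add_pos_of_pos_of_nonneg one_pos (mul_nonneg ha hu)).ne'.isUnit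

theorem eq_one_sub_inv_mul_mulVec_of_mulVec_eq [CommRing R] {M A : Matrix m m R}
    (hM : IsUnit M.det) {x w : m → R} (h : M *ᵥ x = (M - A) *ᵥ w) :
    x = (1 - M⁻¹ * A) *ᵥ w := by
  calc x = M⁻¹ *ᵥ (M *ᵥ x) := by rw [mulVec_mulVec, nonsing_inv_mul M hM, one_mulVec]
    _ = (1 - M⁻¹ * A) *ᵥ w := by rw [h, mulVec_mulVec, Matrix.mul_sub, nonsing_inv_mul M hM]

end Matrix

theorem implicit_td_zero_reward_matrix_form (k : ℕ) (α : ℝ) (hα : 0 ≤ α)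
    (γ lam : ℝ) (w e em φ' : Fin k → ℝ) (φ d : Fin k → ℝ)
    (hφ : φ = e - (γ * lam) • em) (hd : d = φ - γ • φ')
    (w' : Fin k → ℝ)
    (hw' : w' = w + (α * (γ * (φ' ⬝ᵥ w) + γ * lam * (em ⬝ᵥ w) - e ⬝ᵥ w')) • e)
    (Q X : Matrix (Fin k) (Fin k) ℝ)
    (hQ : Q = ((1 : Matrix (Fin k) (Fin k) ℝ) + α • Matrix.vecMulVec e e)⁻¹)
    (hX : X = Matrix.vecMulVec e d) :
    w' = ((1 : Matrix (Fin k) (Fin k) ℝ) - α • (Q * X)).mulVec w := by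
  rw [hQ, hX, ← Matrix.mul_smul]
  refine eq_one_sub_inv_mul_mulVec_of_mulVec_eq (isUnit_det_one_add_smul_vecMulVec_self hα e) ?_
  rw [sub_mulVec, one_add_smul_vecMulVec_mulVec, one_add_smul_vecMulVec_mulVec, smul_mulVec,
    vecMulVec_mulVec, op_smul_eq_smul, hd, hφ]
  simp only [sub_dotProduct, smul_dotProduct, smul_eq_mul]
  nth_rewrite 1 [hw']
  module
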